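/- arXiv:math/0305006 — 5 statements merged into one kernel-verified Lean document; each statement's English description precedes it below -/
import Mathlib

section
/- Let X be a real normed vector space, X_h ⊆ X a linear subspace, and L : X → ℝ a three times continuously differentiable functional. Suppose x ∈ X is a stationary point of L, i.e. L'(x)(y) = 0 for all y ∈ X, and x_h ∈ X_h is a discrete stationary point, i.e. L'(x_h)(y_h) = 0 for all y_h ∈ X_h. Then, with e := x − x_h, for every y_h ∈ X_h there holds the error representation L(x) − L(x_h) = (1/2) L'(x_h)(x − y_h) + R_h, where R_h := (1/2) ∫₀¹ L'''(x_h + s e)(e, e, e) · s(s − 1) ds. -/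
open MeasureTheory intervalIntegral

set_option maxHeartbeats 1000000 in
/-- A posteriori error representation for Galerkin approximations of
stationary points of a three times continuously differentiable functional `L`:
`L(x) - L(x_h) = ½ L'(x_h)(x - y_h) + R_h` with the cubic remainder
`R_h = ½ ∫₀¹ L'''(x_h + s e)(e,e,e) s(s-1) ds`, `e = x - x_h`. -/
theorem stmt_0
    {X : Type*} [NormedAddCommGroup X] [NormedSpace ℝ X]
    (X_h : Submodule ℝ X) (L : X → ℝ)
    (hL : ContDiff ℝ 3 L)
    (x : X) (hx : ∀ y : X, fderiv ℝ L x y = 0)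
    (x_h : X) (hxh : x_h ∈ X_h)
    (hxh' : ∀ y_h ∈ X_h, fderiv ℝ L x_h y_h = 0)
    (y_h : X) (hyh : y_h ∈ X_h) :
    L x - L x_h
      = (1/2) * fderiv ℝ L x_h (x - y_h)
        + (1/2) * ∫ s in (0:ℝ)..1,
            (iteratedFDeriv ℝ 3 L (x_h + s • (x - x_h))
              ![x - x_h, x - x_h, x - x_h]) * (s * (s - 1)) := by
  set e : X := x - x_h with he
  set γ : ℝ → X := fun s => x_h + s • e with hγdef
  set g1 : X → (X →L[ℝ] ℝ) := fderiv ℝ L with hg1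
  set g2 : X → (X →L[ℝ] (X →L[ℝ] ℝ)) := fderiv ℝ g1 with hg2
  set g3 := fderiv ℝ g2 with hg3
  -- smoothness facts
  have hg1c : ContDiff ℝ 2 g1 := hL.fderiv_right (by norm_num)
  have hg2c : ContDiff ℝ 1 g2 := hg1c.fderiv_right (by norm_num)
  have hg3c := (hg2c.fderiv_right (m := 0) (by norm_num)).continuous
  have hγc : Continuous γ := by fun_prop
  have hγ : ∀ s : ℝ, HasDerivAt γ e s := fun s => by
    rw [hγdef]; simpa using ((hasDerivAt_id s).smul_const e).const_add x_h
  -- derivative chains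
  have hu : ∀ s : ℝ, HasDerivAt (fun t => L (γ t)) (g1 (γ s) e) s := fun s =>
    ((hL.differentiable (by norm_num) (γ s)).hasFDerivAt).comp_hasDerivAt s (hγ s)
  have hv : ∀ s : ℝ, HasDerivAt (fun t => g1 (γ t) e) (g2 (γ s) e e) s := by
    intro s
    have h1 : HasDerivAt (fun t => g1 (γ t)) (g2 (γ s) e) s :=
      ((hg1c.differentiable (by norm_num) (γ s)).hasFDerivAt).comp_hasDerivAt s (hγ s)
    simpa using h1.clm_apply (hasDerivAt_const s e)
  have hw : ∀ s : ℝ, HasDerivAt (fun t => g2 (γ t) e e) (g3 (γ s) e e e) s := by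
    intro s
    have h1 : HasDerivAt (fun t => g2 (γ t)) (g3 (γ s) e) s :=
      ((hg2c.differentiable (by norm_num) (γ s)).hasFDerivAt).comp_hasDerivAt s (hγ s)
    have h2 : HasDerivAt (fun t => g2 (γ t) e) (g3 (γ s) e e) s := by
      simpa using h1.clm_apply (hasDerivAt_const s e)
    simpa using h2.clm_apply (hasDerivAt_const s e)
  -- continuity of integrands
  have hucont : Continuous fun s => g1 (γ s) e :=
    (ContinuousLinearMap.apply ℝ ℝ e).continuous.comp ((hg1c.continuous).comp hγc)
  have hvcont : Continuous fun s => g2 (γ s) e e := by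
    have : Continuous fun s => g2 (γ s) e :=
      (ContinuousLinearMap.apply ℝ (X →L[ℝ] ℝ) e).continuous.comp ((hg2c.continuous).comp hγc)
    exact (ContinuousLinearMap.apply ℝ ℝ e).continuous.comp this
  have hwcont : Continuous fun s => g3 (γ s) e e e := by
    have c1 : Continuous fun s => g3 (γ s) e :=
      (ContinuousLinearMap.apply ℝ _ e).continuous.comp (hg3c.comp hγc)
    have c2 : Continuous fun s => g3 (γ s) e e :=
      (ContinuousLinearMap.apply ℝ _ e).continuous.comp c1
    exact (ContinuousLinearMap.apply ℝ ℝ e).continuous.comp c2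
  -- FTC for F(s) = (s - 1/2) u s - (s*(s-1)/2) v s
  have hF : ∀ s ∈ Set.uIcc (0:ℝ) 1,
      HasDerivAt (fun t => (t - 1/2) * (g1 (γ t) e) - (t*(t-1)/2) * (g2 (γ t) e e))
        (g1 (γ s) e - (s*(s-1)/2) * (g3 (γ s) e e e)) s := by
    intro s _
    have h1 : HasDerivAt (fun t => (t - 1/2) * (g1 (γ t) e))
        (1 * (g1 (γ s) e) + (s - 1/2) * (g2 (γ s) e e)) s :=
      (((hasDerivAt_id s).sub_const (1/2))).mul (hv s)
    have h2 : HasDerivAt (fun t => (t*(t-1)/2) * (g2 (γ t) e e))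
        (((1*(s-1) + s*1)/2) * (g2 (γ s) e e) + (s*(s-1)/2) * (g3 (γ s) e e e)) s := by
      have hq : HasDerivAt (fun t : ℝ => t*(t-1)/2) ((1*(s-1) + s*1)/2) s :=
        ((hasDerivAt_id s).mul ((hasDerivAt_id s).sub_const 1)).div_const 2
      exact hq.mul (hw s)
    have := h1.sub h2
    exact this.congr_deriv (by ring)
  have hqcont : Continuous (fun s : ℝ => s*(s-1)/2 * (g3 (γ s) e e e)) :=
    Continuous.mul (by fun_prop) hwcont
  have hFint : IntervalIntegrable
      (fun s => g1 (γ s) e - (s*(s-1)/2) * (g3 (γ s) e e e)) volume 0 1 :=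
    (hucont.sub hqcont).intervalIntegrable 0 1
  have key := intervalIntegral.integral_eq_sub_of_hasDerivAt hF hFint
  -- integral of u
  have hu' : ∀ s ∈ Set.uIcc (0:ℝ) 1, HasDerivAt (fun t => L (γ t)) (g1 (γ s) e) s :=
    fun s _ => hu s
  have keyu := intervalIntegral.integral_eq_sub_of_hasDerivAt hu'
    (hucont.intervalIntegrable 0 1)
  -- endpoint values
  have hγ0 : γ 0 = x_h := by simp [hγdef]
  have hγ1 : γ 1 = x := by simp [hγdef, he]
  have hu1 : g1 (γ 1) e = 0 := by rw [hγ1]; exact hx e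
  -- split the integral
  rw [intervalIntegral.integral_sub (hucont.intervalIntegrable 0 1)
    (hqcont.intervalIntegrable 0 1)] at key
  rw [keyu] at key
  simp only [hγ0, hγ1, hu1] at key keyu
  -- rewrite the target integrand via iteratedFDeriv = g3
  have hiter : ∀ s : ℝ, iteratedFDeriv ℝ 3 L (x_h + s • (x - x_h)) ![x - x_h, x - x_h, x - x_h]
      = g3 (γ s) e e e := by
    intro s
    have h := iteratedFDeriv_succ_apply_right (𝕜 := ℝ) (f := L) (x := γ s) (n := 2)
      ![e, e, e]
    rw [show x_h + s • (x - x_h) = γ s from rfl, ← he, h, iteratedFDeriv_two_apply]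
    rfl
  have hint_eq : (∫ s in (0:ℝ)..1,
      (iteratedFDeriv ℝ 3 L (x_h + s • (x - x_h)) ![x - x_h, x - x_h, x - x_h]) * (s * (s - 1)))
      = ∫ s in (0:ℝ)..1, (g3 (γ s) e e e) * (s * (s-1)) := by
    apply intervalIntegral.integral_congr
    intro s _
    simp only [hiter]
  rw [hint_eq]
  -- relate ∫ (s(s-1)/2) w to ∫ w * (s(s-1))
  have hhalf : (∫ s in (0:ℝ)..1, (s*(s-1)/2) * (g3 (γ s) e e e))
      = (1/2) * ∫ s in (0:ℝ)..1, (g3 (γ s) e e e) * (s * (s-1)) := by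
    rw [← intervalIntegral.integral_const_mul]
    apply intervalIntegral.integral_congr
    intro s _
    ring
  -- stationarity on X_h: g1 x_h (x - x_h) = g1 x_h (x - y_h)
  have hstat : g1 x_h e = fderiv ℝ L x_h (x - y_h) := by
    have hmem : x_h - y_h ∈ X_h := X_h.sub_mem hxh hyh
    have h0 : fderiv ℝ L x_h (x_h - y_h) = 0 := hxh' _ hmem
    have : e = (x - y_h) + (y_h - x_h) := by rw [he]; abel
    rw [hg1, this, map_add]
    have h0' : fderiv ℝ L x_h (y_h - x_h) = 0 := by
      have := hxh' _ (X_h.sub_mem hyh hxh)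
      exact this
    rw [h0']; ring
  rw [hhalf] at key
  -- now conclude by linear arithmetic from key
  rw [← hstat]
  norm_num at key ⊢
  linarith [key, hx e]
end

section
/- Let X be a real normed vector space, X_h ⊆ X a linear subspace, and L : X → ℝ three times continuously differentiable with identically vanishing third Fréchet derivative (i.e. L is at most quadratic). Suppose x ∈ X satisfies L'(x)(y) = 0 for all y ∈ X, and x_h ∈ X_h satisfies L'(x_h)(y_h) = 0 for all y_h ∈ X_h. Then for every y_h ∈ X_h the exact identity L(x) − L(x_h) = (1/2) L'(x_h)(x − y_h) holds (the cubic remainder vanishes). -/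
/-- If the third derivative of `L` vanishes identically (`L` is at most
quadratic), the a posteriori error representation is exact:
`L(x) - L(x_h) = ½ L'(x_h)(x - y_h)` for any `y_h ∈ X_h`. -/
theorem stmt_5
    {X : Type*} [NormedAddCommGroup X] [NormedSpace ℝ X]
    (X_h : Submodule ℝ X) (L : X → ℝ)
    (hL : ContDiff ℝ 3 L)
    (hL3 : ∀ x : X, iteratedFDeriv ℝ 3 L x = 0)
    (x : X) (hx : ∀ y : X, fderiv ℝ L x y = 0)
    (x_h : X) (hxh : x_h ∈ X_h)
    (hxh' : ∀ y_h ∈ X_h, fderiv ℝ L x_h y_h = 0)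
    (y_h : X) (hyh : y_h ∈ X_h) :
    L x - L x_h = (1/2) * fderiv ℝ L x_h (x - y_h) := by
  set e : X := x - x_h with he
  set line : ℝ → X := fun t => x_h + t • e with hline_def
  have hLd : Differentiable ℝ L := hL.differentiable (by norm_num)
  have hL2 : ContDiff ℝ 2 (fderiv ℝ L) := hL.fderiv_right (by norm_num)
  have hL2d : Differentiable ℝ (fderiv ℝ L) := hL2.differentiable (by norm_num)
  -- derivative of iteratedFDeriv 2 vanishes
  have hd2 : ∀ y : X, fderiv ℝ (iteratedFDeriv ℝ 2 L) y = 0 := by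
    intro y
    ext a m
    have h := iteratedFDeriv_succ_apply_left (𝕜 := ℝ) (f := L) (x := y)
      (n := 2) (Fin.cons a m)
    rw [hL3] at h
    simpa using h.symm
  have hdiff2 : Differentiable ℝ (iteratedFDeriv ℝ 2 L) :=
    hL.differentiable_iteratedFDeriv (by norm_num)
  -- second derivative is constant
  have hconst : ∀ y a b : X, fderiv ℝ (fderiv ℝ L) y a b = fderiv ℝ (fderiv ℝ L) x_h a b := by
    intro y a b
    have h := is_const_of_fderiv_eq_zero hdiff2 hd2 y x_h
    have h1 := iteratedFDeriv_two_apply (𝕜 := ℝ) L y ![a, b]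
    have h2 := iteratedFDeriv_two_apply (𝕜 := ℝ) L x_h ![a, b]
    simp only [Matrix.cons_val_zero, Matrix.cons_val_one, Matrix.head_cons] at h1 h2
    rw [← h1, ← h2, h]
  set c : ℝ := fderiv ℝ (fderiv ℝ L) x_h e e with hc
  -- derivative of the line
  have hline : ∀ t : ℝ, HasDerivAt line e t := by
    intro t
    exact (((hasDerivAt_id t).smul_const e).const_add x_h).congr_deriv (one_smul ℝ e)
  -- h t := fderiv L (line t) e ; g t := L (line t)
  set h : ℝ → ℝ := fun t => fderiv ℝ L (line t) e with hh_def
  set g : ℝ → ℝ := fun t => L (line t) with hg_def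
  have hg' : ∀ t : ℝ, HasDerivAt g (h t) t := fun t =>
    ((hLd (line t)).hasFDerivAt.comp_hasDerivAt t (hline t))
  have hh' : ∀ t : ℝ, HasDerivAt h c t := by
    intro t
    have h1 : HasDerivAt (fun t => fderiv ℝ L (line t))
        (fderiv ℝ (fderiv ℝ L) (line t) e) t :=
      (hL2d (line t)).hasFDerivAt.comp_hasDerivAt t (hline t)
    have h2 := (ContinuousLinearMap.apply ℝ ℝ e).hasFDerivAt.comp_hasDerivAt t h1
    have h3 : HasDerivAt h (fderiv ℝ (fderiv ℝ L) (line t) e e) t := h2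
    rwa [hconst (line t) e e] at h3
  -- h is affine : h t = h 0 + t * c
  have haff : ∀ t : ℝ, h t = h 0 + t * c := by
    intro t
    have hD : ∀ s : ℝ, HasDerivAt (fun s => h s - s * c) 0 s := by
      intro s
      simpa using (hh' s).fun_sub ((hasDerivAt_id s).mul_const c)
    have := is_const_of_deriv_eq_zero (fun s => (hD s).differentiableAt)
      (fun s => (hD s).deriv) t 0
    simp only [zero_mul, sub_zero] at this
    linarith
  -- value of g 1 - g 0
  have hG : ∀ s : ℝ, HasDerivAt (fun s => g s - (h 0 * s + c * s ^ 2 / 2)) 0 s := by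
    intro s
    have h1 : HasDerivAt (fun s : ℝ => h 0 * s + c * s ^ 2 / 2) (h 0 + c * s) s := by
      have ha : HasDerivAt (fun s : ℝ => h 0 * s) (h 0) s := by
        simpa using (hasDerivAt_id s).const_mul (h 0)
      have hb : HasDerivAt (fun s : ℝ => c * s ^ 2 / 2) (c * s) s := by
        have := ((hasDerivAt_pow 2 s).const_mul c).div_const 2
        simpa using this.congr_deriv (by ring)
      simpa using ha.fun_add hb
    have := (hg' s).fun_sub h1
    have heq : h s - (h 0 + c * s) = 0 := by rw [haff s]; ring
    simpa [heq] using this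
  have hgval : g 1 - g 0 = h 0 + c / 2 := by
    have := is_const_of_deriv_eq_zero (fun s => (hG s).differentiableAt)
      (fun s => (hG s).deriv) 1 0
    nlinarith [this]
  -- endpoint values
  have hline1 : line 1 = x := by simp [hline_def, he]
  have hline0 : line 0 = x_h := by simp [hline_def]
  have hh1 : h 1 = 0 := by simp only [hh_def, hline1]; exact hx e
  have hcval : c = -h 0 := by
    have := haff 1
    rw [hh1] at this
    linarith
  have hmain : L x - L x_h = (1/2) * fderiv ℝ L x_h e := by
    have hg1 : g 1 = L x := by rw [hg_def]; simp [hline1]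
    have hg0 : g 0 = L x_h := by rw [hg_def]; simp [hline0]
    have hh0 : h 0 = fderiv ℝ L x_h e := by rw [hh_def]; simp [hline0]
    rw [← hg1, ← hg0, hgval, hcval, ← hh0]
    ring
  -- replace e by x - y_h
  have hsplit : fderiv ℝ L x_h (x - y_h) = fderiv ℝ L x_h e + fderiv ℝ L x_h (x_h - y_h) := by
    rw [← map_add]
    congr 1
    rw [he]
    abel
  have hzero : fderiv ℝ L x_h (x_h - y_h) = 0 :=
    hxh' _ (X_h.sub_mem hxh hyh)
  rw [hsplit, hzero, add_zero]
  exact hmain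
end

section
/- Let V be a real Banach space, V_h ⊆ V a linear subspace, J : V → ℝ and a : V → V* (V* the continuous dual) three times continuously differentiable, and define the Lagrangian ℒ(v, y) := J(v) − a(v)(y) on V × V. Suppose u ∈ V solves the primal problem a(u)(ψ) = 0 for all ψ ∈ V, and z ∈ V solves the dual problem J'(u)(φ) = a'(u)(φ, z) for all φ ∈ V, where a'(u)(φ, y) denotes the derivative of v ↦ a(v)(y) at u in direction φ. Suppose u_h, z_h ∈ V_h solve the discrete analogs: a(u_h)(ψ_h) = 0 for all ψ_h ∈ V_h and J'(u_h)(φ_h) = a'(u_h)(φ_h, z_h) for all φ_h ∈ V_h. Define the primal residual ρ(u_h)(·) := −a(u_h)(·) and the dual residual ρ*(z_h)(·) := J'(u_h)(·) − a'(u_h)(·, z_h). Then for arbitrary φ_h, ψ_h ∈ V_h there holds J(u) − J(u_h) = (1/2) ρ(u_h)(z − ψ_h) + (1/2) ρ*(z_h)(u − φ_h) + ℛ_h, where, with x := (u, z), x_h := (u_h, z_h) and e := x − x_h, the remainder is ℛ_h := (1/2) ∫₀¹ ℒ'''(x_h + s e)(e, e, e) · s(s − 1) ds, which is cubic in the primal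 and dual errors e^u := u − u_h and e^z := z − z_h. -/
open MeasureTheory intervalIntegral ContinuousLinearMap

/-- Dual weighted residual error representation for variational
equations: `J(u) - J(u_h) = ½ ρ(u_h)(z - ψ_h) + ½ ρ*(z_h)(u - φ_h) + ℛ_h`, where
`ρ(u_h)(·) = -a(u_h)(·)`, `ρ*(z_h)(·) = J'(u_h)(·) - a'(u_h)(·, z_h)`, and the remainder
`ℛ_h = ½ ∫₀¹ ℒ'''(x_h + s e)(e,e,e) s(s-1) ds` with `ℒ(v,y) = J(v) - a(v)(y)`,
`x = (u,z)`, `x_h = (u_h,z_h)`, `e = x - x_h`. -/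
theorem stmt_6
    {V : Type*} [NormedAddCommGroup V] [NormedSpace ℝ V] [CompleteSpace V]
    (V_h : Submodule ℝ V)
    (J : V → ℝ) (a : V → (V →L[ℝ] ℝ))
    (hJ : ContDiff ℝ 3 J) (ha : ContDiff ℝ 3 a)
    (u : V) (hu : ∀ ψ : V, a u ψ = 0)
    (z : V) (hz : ∀ φ : V, fderiv ℝ J u φ = fderiv ℝ (fun v => a v z) u φ)
    (u_h : V) (hu_hm : u_h ∈ V_h)
    (hu_h : ∀ ψ_h ∈ V_h, a u_h ψ_h = 0)
    (z_h : V) (hz_hm : z_h ∈ V_h)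
    (hz_h : ∀ φ_h ∈ V_h,
      fderiv ℝ J u_h φ_h = fderiv ℝ (fun v => a v z_h) u_h φ_h)
    (φ_h : V) (hφ : φ_h ∈ V_h) (ψ_h : V) (hψ : ψ_h ∈ V_h) :
    J u - J u_h
      = (1/2) * (-(a u_h (z - ψ_h)))
        + (1/2) * (fderiv ℝ J u_h (u - φ_h)
            - fderiv ℝ (fun v => a v z_h) u_h (u - φ_h))
        + (1/2) * ∫ s in (0:ℝ)..1,
            (iteratedFDeriv ℝ 3 (fun p : V × V => J p.1 - a p.1 p.2)
              ((u_h, z_h) + s • ((u, z) - (u_h, z_h)))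
              ![(u, z) - (u_h, z_h), (u, z) - (u_h, z_h), (u, z) - (u_h, z_h)])
            * (s * (s - 1)) := by
  set L : V × V → ℝ := fun p : V × V => J p.1 - a p.1 p.2 with hLdef
  set e : V × V := (u, z) - (u_h, z_h) with he
  set c : V × V := (u_h, z_h) with hc
  have hL : ContDiff ℝ 3 L :=
    (hJ.comp contDiff_fst).sub ((ha.comp contDiff_fst).clm_apply contDiff_snd)
  -- first derivative formula for L
  have hg1 : ∀ p w : V × V, fderiv ℝ L p w
      = fderiv ℝ J p.1 w.1 - (a p.1 w.2 + (fderiv ℝ a p.1 w.1) p.2) := by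
    intro p w
    have h1 : HasFDerivAt (fun q : V × V => J q.1)
        ((fderiv ℝ J p.1).comp (fst ℝ V V)) p :=
      ((hJ.differentiable (by norm_num) p.1).hasFDerivAt).comp p hasFDerivAt_fst
    have h2 : HasFDerivAt (fun q : V × V => a q.1 q.2)
        (((a p.1).comp (snd ℝ V V)) + (((fderiv ℝ a p.1).comp (fst ℝ V V)).flip p.2)) p :=
      HasFDerivAt.clm_apply
        (((ha.differentiable (by norm_num) p.1).hasFDerivAt).comp p hasFDerivAt_fst)
        hasFDerivAt_snd
    rw [show L = ((fun q : V × V => J q.1) - fun q : V × V => a q.1 q.2) from rfl,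
      (h1.sub h2).fderiv]; rfl
  -- derivative of (fun v => a v y)
  have hclm : ∀ (v y w : V), fderiv ℝ (fun x => a x y) v w = (fderiv ℝ a v w) y := by
    intro v y w
    rw [fderiv_clm_apply (ha.differentiable (by norm_num) v) (differentiableAt_const y)]
    simp
  have hL1 : ContDiff ℝ 2 (fderiv ℝ L) := hL.fderiv_right (by norm_num)
  have hL2 : ContDiff ℝ 1 (fderiv ℝ (fderiv ℝ L)) := hL1.fderiv_right (by norm_num)
  have hL3cont :=
    hL2.continuous_fderiv (by norm_num)
  have hline : ∀ s : ℝ, HasDerivAt (fun t : ℝ => c + t • e) e s := fun s => by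
    simpa using ((hasDerivAt_id s).smul_const e).const_add c
  set f : ℝ → ℝ := fun s => L (c + s • e) with hfdef
  set f1 : ℝ → ℝ := fun s => fderiv ℝ L (c + s • e) e with hf1def
  set f2 : ℝ → ℝ := fun s => fderiv ℝ (fderiv ℝ L) (c + s • e) e e with hf2def
  set f3 : ℝ → ℝ := fun s => fderiv ℝ (fderiv ℝ (fderiv ℝ L)) (c + s • e) e e e with hf3def
  have hf : ∀ s, HasDerivAt f (f1 s) s := fun s =>
    ((hL.differentiable (by norm_num) _).hasFDerivAt).comp_hasDerivAt s (hline s)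
  have hf1 : ∀ s, HasDerivAt f1 (f2 s) s := fun s => by
    have h0 : HasDerivAt (fun t : ℝ => fderiv ℝ L (c + t • e))
        (fderiv ℝ (fderiv ℝ L) (c + s • e) e) s :=
      ((hL1.differentiable (by norm_num) _).hasFDerivAt).comp_hasDerivAt s (hline s)
    simpa using h0.clm_apply (hasDerivAt_const s e)
  have hf2 : ∀ s, HasDerivAt f2 (f3 s) s := fun s => by
    have h0 : HasDerivAt (fun t : ℝ => fderiv ℝ (fderiv ℝ L) (c + t • e))
        (fderiv ℝ (fderiv ℝ (fderiv ℝ L)) (c + s • e) e) s :=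
      ((hL2.differentiable (by norm_num) _).hasFDerivAt).comp_hasDerivAt s (hline s)
    have h1 := h0.clm_apply (hasDerivAt_const s e)
    have h2 := h1.clm_apply (hasDerivAt_const s e)
    simpa using h2
  -- continuity of f3
  have hf3cont : Continuous f3 := by
    have h0 :=
      hL3cont.comp (f := fun t : ℝ => c + t • e) (continuous_const.add (continuous_id.smul continuous_const))
    exact ((h0.clm_apply continuous_const).clm_apply continuous_const).clm_apply
      continuous_const
  -- trapezoid identity with integral remainder
  have hA : ∀ s ∈ Set.uIcc (0:ℝ) 1,
      HasDerivAt (fun t => f2 t * (t * (t - 1)) - f1 t * (2 * t - 1) + 2 * f t)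
        (f3 s * (s * (s - 1))) s := by
    intro s _
    have h := (((hf2 s).mul ((hasDerivAt_id s).mul ((hasDerivAt_id s).sub_const 1))).sub
        ((hf1 s).mul (((hasDerivAt_id s).const_mul 2).sub_const 1))).add ((hf s).const_mul 2)
    refine (h.congr_deriv ?_).congr_of_eventuallyEq (Filter.Eventually.of_forall fun t => ?_)
    · simp only [id, Pi.mul_apply]; ring
    · simp only [id, Pi.mul_apply, Pi.sub_apply, Pi.add_apply]
  have hint : (∫ s in (0:ℝ)..1, f3 s * (s * (s - 1)))
      = (f2 1 * (1 * (1 - 1)) - f1 1 * (2 * 1 - 1) + 2 * f 1)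
        - (f2 0 * (0 * (0 - 1)) - f1 0 * (2 * 0 - 1) + 2 * f 0) :=
    integral_eq_sub_of_hasDerivAt hA
      ((hf3cont.mul (continuous_id.mul (continuous_id.sub continuous_const))).intervalIntegrable 0 1)
  -- identify the integrand
  have hiter : (∫ s in (0:ℝ)..1, (iteratedFDeriv ℝ 3 L (c + s • e) ![e, e, e]) * (s * (s - 1)))
      = ∫ s in (0:ℝ)..1, f3 s * (s * (s - 1)) := by
    refine intervalIntegral.integral_congr fun s _ => ?_
    have : iteratedFDeriv ℝ 3 L (c + s • e) ![e, e, e]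
        = fderiv ℝ (fderiv ℝ (fderiv ℝ L)) (c + s • e) e e e := by
      rw [iteratedFDeriv_succ_apply_right, iteratedFDeriv_two_apply]
      simp [Fin.init]
    rw [this]
  -- endpoint values
  have hc1 : c + (1:ℝ) • e = (u, z) := by simp [he]
  have hc0 : c + (0:ℝ) • e = c := by simp
  have he1 : e.1 = u - u_h := rfl
  have he2 : e.2 = z - z_h := rfl
  have hJu : f 1 = J u := by
    simp only [hfdef, hc1]
    simp [hLdef, hu z]
  have hJuh : f 0 = J u_h := by
    simp only [hfdef, hc0]
    simp [hLdef, hc, hu_h z_h hz_hm]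
  have hf1_1 : f1 1 = 0 := by
    simp only [hf1def, hc1, hg1]
    rw [hz e.1, hclm, he2, hu (z - z_h)]
    ring
  have hf1_0 : f1 0 = -(a u_h (z - ψ_h))
      + (fderiv ℝ J u_h (u - φ_h) - fderiv ℝ (fun v => a v z_h) u_h (u - φ_h)) := by
    have h1 : fderiv ℝ J u_h (φ_h - u_h) = (fderiv ℝ a u_h (φ_h - u_h)) z_h := by
      rw [hz_h _ (Submodule.sub_mem _ hφ hu_hm), hclm]
    have h2 : a u_h (ψ_h - z_h) = 0 := hu_h _ (Submodule.sub_mem _ hψ hz_hm)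
    have hsplit1 : u - u_h = (u - φ_h) + (φ_h - u_h) := by abel
    have hsplit2 : z - z_h = (z - ψ_h) + (ψ_h - z_h) := by abel
    simp only [hf1def, hc0, hg1, he1, he2, hc, zero_smul, add_zero]
    rw [hsplit1, hsplit2, hclm u_h z_h (u - φ_h)]
    simp only [map_add, ContinuousLinearMap.add_apply, h2]
    rw [h1]
    ring
  rw [hiter, hint, hf1_0, hf1_1, hJu, hJuh]
  ring
end

section
/- Let V and Q be real Banach spaces, V_h ⊆ V and Q_h ⊆ Q linear subspaces, J : V × Q → ℝ and a : V → V* three times continuously differentiable, and b : Q × V → ℝ a bounded bilinear form. Define the Lagrangian ℒ(v, r, y) := J(v, r) − a(v)(y) − b(r, y) on X := V × Q × V. Suppose (u, q, z) ∈ X solves the first-order optimality system: J_u'(u,q)(φ) − a'(u)(φ, z) = 0 for all φ ∈ V, J_q'(u,q)(χ) − b(χ, z) = 0 for all χ ∈ Q, and a(u)(ψ) + b(q, ψ) = 0 for all ψ ∈ V; and suppose (u_h, q_h, z_h) ∈ V_h × Q_h × V_h solves the Galerkin analog with test functions from V_h, Q_h, V_h respectively. Define the dual residual ρ*(z_h)(·)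 := J_u'(u_h,q_h)(·) − a'(u_h)(·, z_h), the control residual ρ^q(q_h)(·) := J_q'(u_h,q_h)(·) − b(·, z_h), and the primal residual ρ(u_h)(·) := −a(u_h)(·) − b(q_h, ·). Then for arbitrary φ_h, ψ_h ∈ V_h and χ_h ∈ Q_h there holds J(u,q) − J(u_h,q_h) = (1/2) ρ*(z_h)(u − φ_h) + (1/2) ρ^q(q_h)(q − χ_h) + (1/2) ρ(u_h)(z − ψ_h) + ℛ_h, where, with x := (u,q,z), x_h := (u_h,q_h,z_h) and e := x − x_h, the remainder is ℛ_h := (1/2) ∫₀¹ ℒ'''(x_h + s e)(e, e, e) · s(s − 1) ds, cubic in the errors e^u := u − u_h, e^q := q − q_h, e^z := z − z_h. -/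
open MeasureTheory intervalIntegral

section Aux

lemma trapezoid_aux {g g1 g2 g3 : ℝ → ℝ}
    (h1 : ∀ s, HasDerivAt g (g1 s) s) (h2 : ∀ s, HasDerivAt g1 (g2 s) s)
    (h3 : ∀ s, HasDerivAt g2 (g3 s) s)
    (c1 : Continuous g1) (c2 : Continuous g2) (c3 : Continuous g3) :
    g 1 - g 0 = (1/2) * g1 0 + (1/2) * g1 1
      + (1/2) * ∫ s in (0:ℝ)..1, g3 s * (s * (s - 1)) := by
  have hw : ∀ s : ℝ, HasDerivAt (fun t : ℝ => t * (t - 1)) (2 * s - 1) s := by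
    intro s
    have := (hasDerivAt_id s).mul ((hasDerivAt_id s).sub_const 1)
    exact this.congr_deriv (by simp only [id_eq]; ring)
  have hw2 : ∀ s : ℝ, HasDerivAt (fun t : ℝ => 2 * t - 1) 2 s := by
    intro s
    simpa using ((hasDerivAt_id s).const_mul 2).sub_const 1
  have I1 : ∫ s in (0:ℝ)..1, (s * (s - 1)) * g3 s
      = (1 * (1 - 1)) * g2 1 - (0 * (0 - 1)) * g2 0
        - ∫ s in (0:ℝ)..1, (2 * s - 1) * g2 s :=
    integral_mul_deriv_eq_deriv_mul (fun x _ => hw x) (fun x _ => h3 x)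
      (((continuous_const.mul continuous_id).sub continuous_const).intervalIntegrable _ _)
      (c3.intervalIntegrable _ _)
  have I2 : ∫ s in (0:ℝ)..1, (2 * s - 1) * g2 s
      = (2 * 1 - 1) * g1 1 - (2 * 0 - 1) * g1 0 - ∫ s in (0:ℝ)..1, 2 * g1 s :=
    integral_mul_deriv_eq_deriv_mul (fun x _ => hw2 x) (fun x _ => h2 x)
      (continuous_const.intervalIntegrable _ _) (c2.intervalIntegrable _ _)
  have I3 : ∫ s in (0:ℝ)..1, g1 s = g 1 - g 0 :=
    integral_eq_sub_of_hasDerivAt (fun x _ => h1 x) (c1.intervalIntegrable _ _)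
  have I4 : ∫ s in (0:ℝ)..1, 2 * g1 s = 2 * (g 1 - g 0) := by
    rw [intervalIntegral.integral_const_mul, I3]
  have I5 : ∫ s in (0:ℝ)..1, g3 s * (s * (s - 1))
      = ∫ s in (0:ℝ)..1, (s * (s - 1)) * g3 s := by
    apply integral_congr; intro x _; ring
  rw [I5, I1, I2, I4]; ring

variable {V Q : Type*} [NormedAddCommGroup V] [NormedSpace ℝ V]
  [NormedAddCommGroup Q] [NormedSpace ℝ Q]

lemma fderiv_left_partial (J : V × Q → ℝ) (hJ : Differentiable ℝ J) (x : V) (c : Q) (φ : V) :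
    fderiv ℝ (fun v => J (v, c)) x φ = fderiv ℝ J (x, c) (φ, 0) := by
  have h : HasFDerivAt (fun v => J (v, c))
      ((fderiv ℝ J (x, c)).comp (ContinuousLinearMap.inl ℝ V Q)) x :=
    (hJ (x, c)).hasFDerivAt.comp x (hasFDerivAt_prodMk_left x c)
  rw [h.fderiv]; simp

lemma fderiv_right_partial (J : V × Q → ℝ) (hJ : Differentiable ℝ J) (x : V) (c : Q) (χ : Q) :
    fderiv ℝ (fun r => J (x, r)) c χ = fderiv ℝ J (x, c) (0, χ) := by
  have h : HasFDerivAt (fun r => J (x, r))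
      ((fderiv ℝ J (x, c)).comp (ContinuousLinearMap.inr ℝ V Q)) c :=
    (hJ (x, c)).hasFDerivAt.comp c (hasFDerivAt_prodMk_right x c)
  rw [h.fderiv]; simp

lemma fderiv_a_partial (a : V → (V →L[ℝ] ℝ)) (hA : Differentiable ℝ a) (x y φ : V) :
    fderiv ℝ (fun v => a v y) x φ = (fderiv ℝ a x φ) y := by
  rw [((hA x).hasFDerivAt.clm_apply (hasFDerivAt_const y x)).fderiv]
  simp

lemma fderiv_L (J : V × Q → ℝ) (a : V → (V →L[ℝ] ℝ)) (b : Q →L[ℝ] V →L[ℝ] ℝ)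
    (hJ : Differentiable ℝ J) (hA : Differentiable ℝ a) (p w : V × Q × V) :
    fderiv ℝ (fun p : V × Q × V => J (p.1, p.2.1) - a p.1 p.2.2 - b p.2.1 p.2.2) p w
      = (fderiv ℝ (fun v => J (v, p.2.1)) p.1 w.1
          + fderiv ℝ (fun r => J (p.1, r)) p.2.1 w.2.1)
        - (fderiv ℝ (fun v => a v p.2.2) p.1 w.1 + a p.1 w.2.2)
        - (b w.2.1 p.2.2 + b p.2.1 w.2.2) := by
  set fstX : (V × Q × V) →L[ℝ] V := ContinuousLinearMap.fst ℝ V (Q × V) with hfstX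
  set qproj : (V × Q × V) →L[ℝ] Q :=
    (ContinuousLinearMap.fst ℝ Q V).comp (ContinuousLinearMap.snd ℝ V (Q × V)) with hqproj
  set vproj : (V × Q × V) →L[ℝ] V :=
    (ContinuousLinearMap.snd ℝ Q V).comp (ContinuousLinearMap.snd ℝ V (Q × V)) with hvproj
  have hπ : HasFDerivAt (fun p : V × Q × V => (p.1, p.2.1)) (fstX.prod qproj) p :=
    (fstX.prod qproj).hasFDerivAt
  have h1 : HasFDerivAt (fun p : V × Q × V => J (p.1, p.2.1))
      ((fderiv ℝ J (p.1, p.2.1)).comp (fstX.prod qproj)) p :=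
    (hJ _).hasFDerivAt.comp p hπ
  have hc : HasFDerivAt (fun p : V × Q × V => a p.1)
      ((fderiv ℝ a p.1).comp fstX) p :=
    (hA _).hasFDerivAt.comp p fstX.hasFDerivAt
  have h2 : HasFDerivAt (fun p : V × Q × V => a p.1 p.2.2)
      ((a p.1).comp vproj + ((fderiv ℝ a p.1).comp fstX).flip p.2.2) p :=
    hc.clm_apply vproj.hasFDerivAt
  have h3 : HasFDerivAt (fun p : V × Q × V => b p.2.1 p.2.2)
      ((b p.2.1).comp vproj + (b.comp qproj).flip p.2.2) p :=
    (b.comp qproj).hasFDerivAt.clm_apply vproj.hasFDerivAt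
  rw [HasFDerivAt.fderiv (f := fun p : V × Q × V => J (p.1, p.2.1) - a p.1 p.2.2 - b p.2.1 p.2.2) ((h1.sub h2).sub h3)]
  rw [fderiv_left_partial J hJ, fderiv_right_partial J hJ, fderiv_a_partial a hA]
  have hsplit : (w.1, w.2.1) = ((w.1, (0 : Q)) : V × Q) + ((0 : V), w.2.1) := by simp
  simp only [ContinuousLinearMap.sub_apply, ContinuousLinearMap.add_apply,
    ContinuousLinearMap.comp_apply, ContinuousLinearMap.flip_apply,
    ContinuousLinearMap.prod_apply, ContinuousLinearMap.coe_fst',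
    ContinuousLinearMap.coe_snd', hfstX, hqproj, hvproj]
  rw [hsplit, map_add]
  ring

lemma iteratedFDeriv_three_apply (f : (V × Q × V) → ℝ) (x v : V × Q × V) :
    iteratedFDeriv ℝ 3 f x ![v, v, v]
      = fderiv ℝ (fderiv ℝ (fderiv ℝ f)) x v v v := by
  have h1 := iteratedFDeriv_succ_apply_right (𝕜 := ℝ) (n := 2) (f := f) (x := x) ![v, v, v]
  have h2 := iteratedFDeriv_two_apply (𝕜 := ℝ) (fun y => fderiv ℝ f y) x (Fin.init ![v, v, v])
  rw [h2] at h1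
  simpa [Fin.init, Fin.last] using h1

end Aux

set_option maxHeartbeats 1000000 in
/-- Dual weighted residual error representation for optimal control
problems: `J(u,q) - J(u_h,q_h) = ½ ρ*(z_h)(u - φ_h) + ½ ρ^q(q_h)(q - χ_h)
+ ½ ρ(u_h)(z - ψ_h) + ℛ_h`, with the Lagrangian
`ℒ(v,r,y) = J(v,r) - a(v)(y) - b(r,y)` and cubic remainder
`ℛ_h = ½ ∫₀¹ ℒ'''(x_h + s e)(e,e,e) s(s-1) ds`, `x = (u,q,z)`, `x_h = (u_h,q_h,z_h)`,
`e = x - x_h`. -/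
theorem stmt_9
    {V Q : Type*} [NormedAddCommGroup V] [NormedSpace ℝ V] [CompleteSpace V]
    [NormedAddCommGroup Q] [NormedSpace ℝ Q] [CompleteSpace Q]
    (V_h : Submodule ℝ V) (Q_h : Submodule ℝ Q)
    (J : V × Q → ℝ) (a : V → (V →L[ℝ] ℝ)) (b : Q →L[ℝ] V →L[ℝ] ℝ)
    (hJ : ContDiff ℝ 3 J) (ha : ContDiff ℝ 3 a)
    (u : V) (q : Q) (z : V)
    (hdual : ∀ φ : V,
      fderiv ℝ (fun v => J (v, q)) u φ - fderiv ℝ (fun v => a v z) u φ = 0)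
    (hcontrol : ∀ χ : Q, fderiv ℝ (fun r => J (u, r)) q χ - b χ z = 0)
    (hstate : ∀ ψ : V, a u ψ + b q ψ = 0)
    (u_h : V) (hu_hm : u_h ∈ V_h) (q_h : Q) (hq_hm : q_h ∈ Q_h)
    (z_h : V) (hz_hm : z_h ∈ V_h)
    (hdual_h : ∀ φ_h ∈ V_h,
      fderiv ℝ (fun v => J (v, q_h)) u_h φ_h
        - fderiv ℝ (fun v => a v z_h) u_h φ_h = 0)
    (hcontrol_h : ∀ χ_h ∈ Q_h,
      fderiv ℝ (fun r => J (u_h, r)) q_h χ_h - b χ_h z_h = 0)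
    (hstate_h : ∀ ψ_h ∈ V_h, a u_h ψ_h + b q_h ψ_h = 0)
    (φ_h : V) (hφ : φ_h ∈ V_h) (ψ_h : V) (hψ : ψ_h ∈ V_h)
    (χ_h : Q) (hχ : χ_h ∈ Q_h) :
    J (u, q) - J (u_h, q_h)
      = (1/2) * (fderiv ℝ (fun v => J (v, q_h)) u_h (u - φ_h)
            - fderiv ℝ (fun v => a v z_h) u_h (u - φ_h))
        + (1/2) * (fderiv ℝ (fun r => J (u_h, r)) q_h (q - χ_h) - b (q - χ_h) z_h)
        + (1/2) * (-(a u_h (z - ψ_h)) - b q_h (z - ψ_h))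
        + (1/2) * ∫ s in (0:ℝ)..1,
            (iteratedFDeriv ℝ 3
              (fun p : V × Q × V => J (p.1, p.2.1) - a p.1 p.2.2 - b p.2.1 p.2.2)
              ((u_h, q_h, z_h) + s • ((u, q, z) - (u_h, q_h, z_h)))
              ![(u, q, z) - (u_h, q_h, z_h), (u, q, z) - (u_h, q_h, z_h),
                (u, q, z) - (u_h, q_h, z_h)])
            * (s * (s - 1)) := by
  set L : V × Q × V → ℝ := fun p => J (p.1, p.2.1) - a p.1 p.2.2 - b p.2.1 p.2.2 with hL
  have hJd : Differentiable ℝ J := hJ.differentiable (by norm_num)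
  have had : Differentiable ℝ a := ha.differentiable (by norm_num)
  have hLC : ContDiff ℝ 3 L := by
    rw [hL]
    exact ((hJ.comp (contDiff_fst.prodMk (contDiff_fst.comp contDiff_snd))).sub
      ((ha.comp contDiff_fst).clm_apply (contDiff_snd.comp contDiff_snd))).sub
      ((b.contDiff.comp (contDiff_fst.comp contDiff_snd)).clm_apply
        (contDiff_snd.comp contDiff_snd))
  have hD1 : ContDiff ℝ 2 (fderiv ℝ L) := hLC.fderiv_right (by norm_num)
  have hD2 : ContDiff ℝ 1 (fderiv ℝ (fderiv ℝ L)) := hD1.fderiv_right (by norm_num)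
  have flp : ∀ p w : V × Q × V, fderiv ℝ L p w
      = (fderiv ℝ (fun v => J (v, p.2.1)) p.1 w.1
          + fderiv ℝ (fun r => J (p.1, r)) p.2.1 w.2.1)
        - (fderiv ℝ (fun v => a v p.2.2) p.1 w.1 + a p.1 w.2.2)
        - (b w.2.1 p.2.2 + b p.2.1 w.2.2) := by
    intro p w; rw [hL]; exact fderiv_L J a b hJd had p w
  set xh : V × Q × V := (u_h, q_h, z_h) with hxh
  set ev : V × Q × V := (u, q, z) - (u_h, q_h, z_h) with hev
  set γ : ℝ → V × Q × V := fun s => xh + s • ev with hγdef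
  have hγ : ∀ s : ℝ, HasDerivAt γ ev s := by
    intro s
    rw [hγdef]
    simpa using ((hasDerivAt_id s).smul_const ev).const_add xh
  have cγ : Continuous γ := by
    rw [hγdef]; exact continuous_const.add (continuous_id.smul continuous_const)
  -- derivatives of g, g1, g2 along the line
  have h1 : ∀ s : ℝ, HasDerivAt (fun t => L (γ t)) (fderiv ℝ L (γ s) ev) s := by
    intro s
    exact (hLC.differentiable (by norm_num) (γ s)).hasFDerivAt.comp_hasDerivAt s (hγ s)
  have h2 : ∀ s : ℝ, HasDerivAt (fun t => fderiv ℝ L (γ t) ev)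
      (fderiv ℝ (fderiv ℝ L) (γ s) ev ev) s := by
    intro s
    have hfd : HasFDerivAt (fun y => fderiv ℝ L y ev)
        ((fderiv ℝ L (γ s)).comp (0 : (V × Q × V) →L[ℝ] (V × Q × V))
          + (fderiv ℝ (fderiv ℝ L) (γ s)).flip ev) (γ s) :=
      (hD1.differentiable (by norm_num) (γ s)).hasFDerivAt.clm_apply
        (hasFDerivAt_const ev (γ s))
    refine (hfd.comp_hasDerivAt s (hγ s)).congr_deriv ?_
    simp
  have h3 : ∀ s : ℝ, HasDerivAt (fun t => fderiv ℝ (fderiv ℝ L) (γ t) ev ev)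
      (fderiv ℝ (fderiv ℝ (fderiv ℝ L)) (γ s) ev ev ev) s := by
    intro s
    have hfdA : HasFDerivAt (fun y => fderiv ℝ (fderiv ℝ L) y ev)
        ((fderiv ℝ (fderiv ℝ L) (γ s)).comp (0 : (V × Q × V) →L[ℝ] (V × Q × V))
          + (fderiv ℝ (fderiv ℝ (fderiv ℝ L)) (γ s)).flip ev) (γ s) :=
      (hD2.differentiable (by norm_num) (γ s)).hasFDerivAt.clm_apply
        (hasFDerivAt_const ev (γ s))
    have hfdB := hfdA.clm_apply (hasFDerivAt_const ev (γ s))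
    refine (hfdB.comp_hasDerivAt s (hγ s)).congr_deriv ?_
    simp
  -- continuity of the derivative functions
  have c1 : Continuous (fun s : ℝ => fderiv ℝ L (γ s) ev) :=
    (((hLC.continuous_fderiv (by norm_num)).comp cγ).clm_apply continuous_const)
  have c2 : Continuous (fun s : ℝ => fderiv ℝ (fderiv ℝ L) (γ s) ev ev) :=
    ((((hD1.continuous_fderiv (by norm_num)).comp cγ).clm_apply
      continuous_const).clm_apply continuous_const)
  have c3 : Continuous (fun s : ℝ => fderiv ℝ (fderiv ℝ (fderiv ℝ L)) (γ s) ev ev ev) :=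
    (((((hD2.continuous_fderiv (by norm_num)).comp cγ).clm_apply
      continuous_const).clm_apply continuous_const).clm_apply continuous_const)
  have key := trapezoid_aux h1 h2 h3 c1 c2 c3
  -- endpoints of the line
  have hγ1 : γ 1 = (u, q, z) := by
    rw [hγdef, hxh, hev]; simp
  have hγ0 : γ 0 = xh := by rw [hγdef]; simp
  -- endpoint values of L
  have hLx : L (u, q, z) = J (u, q) := by
    rw [hL]; dsimp only; linarith [hstate z]
  have hLxh : L xh = J (u_h, q_h) := by
    rw [hL, hxh]; dsimp only; linarith [hstate_h z_h hz_hm]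
  -- first derivative at the continuous solution vanishes
  have hg1x : fderiv ℝ L (u, q, z) ev = 0 := by
    rw [flp, hev]
    simp only [Prod.fst_sub, Prod.snd_sub]
    linarith [hdual (u - u_h), hcontrol (q - q_h), hstate (z - z_h)]
  -- first derivative at discrete solution
  have hsum : ev = ((u - φ_h, q - χ_h, z - ψ_h) : V × Q × V)
      + (φ_h - u_h, χ_h - q_h, ψ_h - z_h) := by
    rw [hev]
    simp only [Prod.mk_sub_mk, Prod.mk_add_mk, Prod.mk.injEq]
    refine ⟨by abel, by abel, by abel⟩
  have hdh0 : fderiv ℝ L xh ((φ_h - u_h, χ_h - q_h, ψ_h - z_h) : V × Q × V) = 0 := by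
    rw [flp, hxh]
    dsimp only
    linarith [hdual_h (φ_h - u_h) (Submodule.sub_mem _ hφ hu_hm),
      hcontrol_h (χ_h - q_h) (Submodule.sub_mem _ hχ hq_hm),
      hstate_h (ψ_h - z_h) (Submodule.sub_mem _ hψ hz_hm)]
  have hd : fderiv ℝ L xh ((u - φ_h, q - χ_h, z - ψ_h) : V × Q × V)
      = (fderiv ℝ (fun v => J (v, q_h)) u_h (u - φ_h)
          - fderiv ℝ (fun v => a v z_h) u_h (u - φ_h))
        + (fderiv ℝ (fun r => J (u_h, r)) q_h (q - χ_h) - b (q - χ_h) z_h)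
        + (-(a u_h (z - ψ_h)) - b q_h (z - ψ_h)) := by
    rw [flp, hxh]
    dsimp only
    ring
  have hg1xh : fderiv ℝ L xh ev
      = (fderiv ℝ (fun v => J (v, q_h)) u_h (u - φ_h)
          - fderiv ℝ (fun v => a v z_h) u_h (u - φ_h))
        + (fderiv ℝ (fun r => J (u_h, r)) q_h (q - χ_h) - b (q - χ_h) z_h)
        + (-(a u_h (z - ψ_h)) - b q_h (z - ψ_h)) := by
    rw [hsum, map_add, hdh0, hd, add_zero]
  -- identify the integrand with the third derivative along the line
  have hint : (∫ s in (0:ℝ)..1,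
        (iteratedFDeriv ℝ 3 L (xh + s • ev) ![ev, ev, ev]) * (s * (s - 1)))
      = ∫ s in (0:ℝ)..1, (fderiv ℝ (fderiv ℝ (fderiv ℝ L)) (γ s) ev ev ev) * (s * (s - 1)) := by
    apply integral_congr; intro s _
    simp only [iteratedFDeriv_three_apply]; rfl
  rw [hγ1, hγ0, hLx, hLxh, hg1xh, hg1x] at key
  rw [hint]
  linarith [key]
end

section
/- Let V be a complex vector space, V_h ⊆ V a linear subspace, and a, m : V × V → ℂ bilinear forms. Suppose: (i) u ∈ V, λ ∈ ℂ satisfy the primal eigenvalue problem a(u, ψ) = λ m(u, ψ) for all ψ ∈ V with normalization m(u, u) = 1; (ii) z ∈ V, π ∈ ℂ satisfy the adjoint eigenvalue problem a(φ, z) = π m(φ, z) for all φ ∈ V with normalization m(u, z) = 1; (iii) u_h ∈ V_h, λ_h ∈ ℂ satisfy the discrete primal problem a(u_h, ψ_h) = λ_h m(u_h, ψ_h) for all ψ_h ∈ V_h with m(u_h, u_h) = 1; (iv) z_h ∈ V_h, π_h ∈ ℂ satisfy the discrete adjoint problem a(φ_h, z_h) = π_h m(φ_h, z_h) for all φ_h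 ∈ V_h with m(u_h, z_h) = 1. Define the primal residual ρ(u_h, λ_h)(ψ) := a(u_h, ψ) − λ_h m(u_h, ψ) and the dual residual ρ*(z_h, π_h)(φ) := a(φ, z_h) − π_h m(φ, z_h). Then for arbitrary ψ_h, φ_h ∈ V_h there holds the a posteriori error representation λ − λ_h = (1/2) ρ(u_h, λ_h)(z − ψ_h) + (1/2) ρ*(z_h, π_h)(u − φ_h) + ℛ_h, where ℛ_h = (1/2)(λ − λ_h) · m(u − u_h, z − z_h). -/
/-- A posteriori error representation for Galerkin approximation of
generalized eigenvalue problems: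
`λ - λ_h = ½ ρ(u_h,λ_h)(z - ψ_h) + ½ ρ*(z_h,π_h)(u - φ_h) + ℛ_h`, where
`ρ(u_h,λ_h)(ψ) = a(u_h,ψ) - λ_h m(u_h,ψ)`, `ρ*(z_h,π_h)(φ) = a(φ,z_h) - π_h m(φ,z_h)`,
and `ℛ_h = ½ (λ - λ_h) m(u - u_h, z - z_h)`. -/
theorem stmt_11
    {V : Type*} [AddCommGroup V] [Module ℂ V]
    (V_h : Submodule ℂ V)
    (a m : V →ₗ[ℂ] V →ₗ[ℂ] ℂ)
    (u : V) (lam : ℂ)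
    (hu : ∀ ψ : V, a u ψ = lam * m u ψ) (hun : m u u = 1)
    (z : V) (pi : ℂ)
    (hz : ∀ φ : V, a φ z = pi * m φ z) (hzn : m u z = 1)
    (u_h : V) (hu_hm : u_h ∈ V_h) (lam_h : ℂ)
    (hu_h : ∀ ψ_h ∈ V_h, a u_h ψ_h = lam_h * m u_h ψ_h) (hu_hn : m u_h u_h = 1)
    (z_h : V) (hz_hm : z_h ∈ V_h) (pi_h : ℂ)
    (hz_h : ∀ φ_h ∈ V_h, a φ_h z_h = pi_h * m φ_h z_h) (hz_hn : m u_h z_h = 1)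
    (ψ_h : V) (hψ : ψ_h ∈ V_h) (φ_h : V) (hφ : φ_h ∈ V_h) :
    lam - lam_h
      = (1/2) * (a u_h (z - ψ_h) - lam_h * m u_h (z - ψ_h))
        + (1/2) * (a (u - φ_h) z_h - pi_h * m (u - φ_h) z_h)
        + (1/2) * (lam - lam_h) * m (u - u_h) (z - z_h) := by
  have h1 := hu z
  have h2 := hz u
  have h3 := hz u_h
  have h4 := hu z_h
  have h5 := hu_h ψ_h hψ
  have h6 := hz_h φ_h hφ
  have h7 := hu_h z_h hz_hm
  have h8 := hz_h u_h hu_hm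
  have hπ : pi = lam := by
    rw [hzn, mul_one] at h1 h2; rw [← h1, ← h2]
  have hπh : pi_h = lam_h := by
    rw [hz_hn, mul_one] at h7 h8; rw [← h7, ← h8]
  subst hπ hπh
  simp only [map_sub, LinearMap.sub_apply]
  linear_combination -(1/2)*h3 + (1/2)*h5 - (1/2)*h4 + (1/2)*h6 -
    (1/2)*(pi - pi_h)*hzn - (1/2)*(pi - pi_h)*hz_hn
end
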